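/- Let λ be a frequency and k ∈ ℕ. Suppose the canonical basis {e^{-λ_n s}} is democratic in H_{2k}^λ: there exists D > 0 such that for all finite sets A, B ⊆ ℕ with |A| ≤ |B|, ‖∑_{n∈A} e^{-λ_n s}‖_{H_{2k}^λ} ≤ D·‖∑_{n∈B} e^{-λ_n s}‖_{H_{2k}^λ}. Then there exists a constant C > 0 such that for every finite set A ⊆ ℕ and all complex coefficients (a_n)_{n∈A}: (∑_{n∈A} |a_n|²)^{1/2} ≤ ‖∑_{n∈A} a_n e^{-λ_n s}‖_{H_{2k}^λ} ≤ C·log(|A| + 1)·(∑_{n∈A} |a_n|²)^{1/2}. -/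

import Mathlib

open MeasureTheory Filter Finset

/-- `M_{p,R}((a_n)_{n∈A}) = ((1/(2R)) ∫_{-R}^{R} |∑_{n∈A} a_n e^{-iλ_n t}|^p dt)^{1/p}`,
whose limit as `R → ∞` defines the `H_p^λ` norm of the `λ`-Dirichlet polynomial
`∑_{n∈A} a_n e^{-λ_n s}`. -/
noncomputable def dirichletMpR (Λ : ℕ → ℝ) (p : ℝ) (A : Finset ℕ) (a : ℕ → ℂ) (R : ℝ) : ℝ :=
  ((1 / (2 * R)) * ∫ t in (-R)..R,
      ‖∑ n ∈ A, a n * Complex.exp (-(Complex.I * (Λ n * t)))‖ ^ p) ^ (1 / p)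

/-- The `H_p^λ` norm of the `λ`-Dirichlet polynomial `∑_{n∈A} a_n e^{-λ_n s}`, i.e.
`lim_{R→∞} M_{p,R}((a_n))`, expressed via `liminf` (these coincide under the standing
assumption that the limit exists). -/
noncomputable def dirichletHpNorm (Λ : ℕ → ℝ) (p : ℝ) (A : Finset ℕ) (a : ℕ → ℂ) : ℝ :=
  liminf (dirichletMpR Λ p A a) atTop

open ProbabilityTheory
open scoped Topology ComplexConjugate

/-!
For `p = 2k` the `H_p^λ` norm is computable: `‖F‖_{2k}^{2k}` is the mean of `|F^k|²`, and `F^k` is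
again an exponential sum, so by Parseval it equals `∑_σ |c_σ|²`, where `c_σ` sums the products
`a_{u_1} ⋯ a_{u_k}` over the `k`-tuples with `λ_{u_1} + ⋯ + λ_{u_k} = σ`. The lower bound is
`‖F‖_2 ≤ ‖F‖_{2k}` together with Parseval. For the upper bound, comparing the `c_σ` gives
`‖∑ a_n e^{-λ_n s}‖ ≤ max |a_n| · ‖∑_{n ∈ A} e^{-λ_n s}‖`; by democracy the latter is at most `D`
times the norm over a lacunary set `B` of the same size, on which a sum of `k` frequencies
determines its summands up to order, so that `‖∑_{n ∈ B} e^{-λ_n s}‖_{2k} ≤ √(k |B|)`. Splitting `A` into the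
`O(log |A|)` dyadic level sets of `|a_n|` and applying the triangle inequality finishes the proof.
-/

noncomputable def trigPoly {ι : Type*} (s : Finset ι) (c : ι → ℂ) (θ : ι → ℝ) (t : ℝ) : ℂ :=
  ∑ i ∈ s, c i * Complex.exp (-(Complex.I * (θ i * t)))

lemma continuous_trigPoly {ι : Type*} (s : Finset ι) (c : ι → ℂ) (θ : ι → ℝ) :
    Continuous (trigPoly s c θ) := by
  unfold trigPoly; fun_prop

lemma tendsto_mean_exp (θ : ℝ) :
    Tendsto (fun R : ℝ => (1 / (2 * R) : ℂ) * ∫ t in (-R)..R, Complex.exp (-(Complex.I * (θ * t))))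
      atTop (𝓝 (if θ = 0 then 1 else 0)) := by
  split_ifs with hθ
  · refine tendsto_const_nhds.congr' ?_
    filter_upwards [eventually_gt_atTop 0] with R hR
    have : (R : ℂ) ≠ 0 := by exact_mod_cast hR.ne'
    simp only [hθ, Complex.ofReal_zero, zero_mul, mul_zero, neg_zero, Complex.exp_zero,
      intervalIntegral.integral_const, sub_neg_eq_add, Complex.real_smul, Complex.ofReal_add,
      mul_one]
    field_simp
    ring
  · set c : ℂ := -(Complex.I * θ)
    have hc : c ≠ 0 := by simp [c, hθ]
    have hexp : ∀ x : ℝ, ‖Complex.exp (c * x)‖ = 1 := fun x => by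
      rw [Complex.norm_exp]; simp [c]
    refine squeeze_zero_norm' ?_ ((tendsto_const_nhds (x := ‖c‖⁻¹)).div_atTop tendsto_id)
    filter_upwards [eventually_gt_atTop 0] with R hR
    have hint : ∫ t in (-R)..R, Complex.exp (-(Complex.I * (θ * t)))
        = (Complex.exp (c * R) - Complex.exp (c * (-R : ℝ))) / c := by
      rw [← integral_exp_mul_complex hc]
      congr 1 with t
      simp only [c]; ring_nf
    rw [hint, norm_mul, norm_div (_ - _) c]
    calc _ ≤ ‖(1 / (2 * R) : ℂ)‖ * (2 / ‖c‖) := by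
          gcongr
          refine (norm_sub_le _ _).trans ?_
          rw [hexp, hexp]; norm_num
      _ = ‖c‖⁻¹ / R := by
          rw [norm_div, norm_one, Complex.norm_mul, Complex.norm_ofNat, Complex.norm_real,
            Real.norm_of_nonneg hR.le]
          field_simp

lemma sq_norm_trigPoly {ι : Type*} (s : Finset ι) (c : ι → ℂ) (θ : ι → ℝ) (t : ℝ) :
    (‖trigPoly s c θ t‖ ^ 2 : ℂ) = ∑ i ∈ s, ∑ j ∈ s,
      c i * conj (c j) * Complex.exp (-(Complex.I * ((θ i - θ j : ℝ) * t))) := by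
  rw [← Complex.mul_conj', trigPoly, map_sum, sum_mul_sum]
  refine sum_congr rfl fun i _ => sum_congr rfl fun j _ => ?_
  rw [map_mul, ← Complex.exp_conj, mul_mul_mul_comm, ← Complex.exp_add]
  congr 2
  simp only [map_neg, map_mul, Complex.conj_I, Complex.conj_ofReal]
  push_cast
  ring

lemma tendsto_mean_sq_norm_trigPoly {ι : Type*} (s : Finset ι) (c : ι → ℂ) {θ : ι → ℝ}
    (hθ : Set.InjOn θ s) :
    Tendsto (fun R : ℝ => (1 / (2 * R)) * ∫ t in (-R)..R, ‖trigPoly s c θ t‖ ^ 2)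
      atTop (𝓝 (∑ i ∈ s, ‖c i‖ ^ 2)) := by
  have hmean : ∀ R : ℝ, (((1 / (2 * R)) * ∫ t in (-R)..R, ‖trigPoly s c θ t‖ ^ 2 : ℝ) : ℂ)
      = ∑ i ∈ s, ∑ j ∈ s, c i * conj (c j) *
          ((1 / (2 * R) : ℂ) *
            ∫ t in (-R)..R, Complex.exp (-(Complex.I * ((θ i - θ j : ℝ) * t)))) := by
    intro R
    rw [Complex.ofReal_mul, ← intervalIntegral.integral_ofReal]
    simp_rw [Complex.ofReal_pow, sq_norm_trigPoly]
    rw [intervalIntegral.integral_finsetSum fun i _ => by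
      apply Continuous.intervalIntegrable; fun_prop, mul_sum]
    refine sum_congr rfl fun i _ => ?_
    rw [intervalIntegral.integral_finsetSum fun j _ => by
      apply Continuous.intervalIntegrable; fun_prop, mul_sum]
    refine sum_congr rfl fun j _ => ?_
    rw [intervalIntegral.integral_const_mul]
    push_cast
    ring
  have hdiag : ∑ i ∈ s, ∑ j ∈ s, c i * conj (c j) * (if θ i - θ j = 0 then 1 else 0)
      = ((∑ i ∈ s, ‖c i‖ ^ 2 : ℝ) : ℂ) := by
    classical
    push_cast
    refine sum_congr rfl fun i hi => ?_
    simp_rw [mul_ite, mul_one, mul_zero, sub_eq_zero]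
    rw [sum_congr rfl fun j hj => if_congr (hθ.eq_iff hi hj) rfl rfl, sum_ite_eq, if_pos hi,
      Complex.mul_conj']
  have hC := tendsto_finsetSum s fun i _ => tendsto_finsetSum s fun j _ =>
    (tendsto_mean_exp (θ i - θ j)).const_mul (c i * conj (c j))
  rw [hdiag] at hC
  have h := (Complex.continuous_re.tendsto _).comp hC
  simpa only [Function.comp_def, ← hmean, Complex.ofReal_re] using h

lemma eLpNorm_cond_Ioc {E : Type*} [NormedAddCommGroup E] {R : ℝ} (hR : 0 < R) {p : ℝ}
    (hp : 0 < p) {f : ℝ → E} (hf : Continuous f) :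
    eLpNorm f (ENNReal.ofReal p) (volume[|Set.Ioc (-R) R])
      = ENNReal.ofReal (((1 / (2 * R)) * ∫ t in (-R)..R, ‖f t‖ ^ p) ^ (1 / p)) := by
  have hint : IntegrableOn (fun t => ‖f t‖ ^ p) (Set.Ioc (-R) R) :=
    ((continuous_norm.comp hf).rpow_const fun _ => Or.inr hp.le).integrableOn_Ioc
  have hlint : ∫⁻ t in Set.Ioc (-R) R, ‖f t‖ₑ ^ p
      = ENNReal.ofReal (∫ t in Set.Ioc (-R) R, ‖f t‖ ^ p) := by
    rw [ofReal_integral_eq_lintegral_ofReal hint (.of_forall fun t => by positivity)]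
    refine lintegral_congr fun t => ?_
    rw [← ofReal_norm, ENNReal.ofReal_rpow_of_nonneg (norm_nonneg _) hp.le]
  rw [eLpNorm_eq_lintegral_rpow_enorm_toReal (by simpa using hp) ENNReal.ofReal_ne_top,
    ENNReal.toReal_ofReal hp.le, ProbabilityTheory.cond, lintegral_smul_measure, hlint,
    Real.volume_Ioc, intervalIntegral.integral_of_le (by linarith), sub_neg_eq_add, ← two_mul,
    smul_eq_mul, ← ENNReal.ofReal_inv_of_pos (by linarith), ← one_div,
    ← ENNReal.ofReal_mul (by positivity), ENNReal.ofReal_rpow_of_nonneg _ (by positivity)]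
  exact mul_nonneg (by positivity) (setIntegral_nonneg measurableSet_Ioc fun t _ => by positivity)

section Dirichlet

variable (Λ : ℕ → ℝ) (A : Finset ℕ) (a : ℕ → ℂ)

lemma dirichletMpR_eq_trigPoly (p R : ℝ) : dirichletMpR Λ p A a R
    = ((1 / (2 * R)) * ∫ t in (-R)..R, ‖trigPoly A a Λ t‖ ^ p) ^ (1 / p) := rfl

lemma dirichletMpR_nonneg (p : ℝ) {R : ℝ} (hR : 0 < R) : 0 ≤ dirichletMpR Λ p A a R :=
  Real.rpow_nonneg (mul_nonneg (by positivity)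
    (intervalIntegral.integral_nonneg (by linarith) fun _ _ => by positivity)) _

lemma ofReal_dirichletMpR {p R : ℝ} (hp : 0 < p) (hR : 0 < R) :
    ENNReal.ofReal (dirichletMpR Λ p A a R)
      = eLpNorm (trigPoly A a Λ) (ENNReal.ofReal p) (volume[|Set.Ioc (-R) R]) :=
  (eLpNorm_cond_Ioc hR hp (continuous_trigPoly A a Λ)).symm

lemma dirichletMpR_union_le {p R : ℝ} (hp : 1 ≤ p) (hR : 0 < R) {B : Finset ℕ}
    (hAB : Disjoint A B) :
    dirichletMpR Λ p (A ∪ B) a R ≤ dirichletMpR Λ p A a R + dirichletMpR Λ p B a R := by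
  have hp0 : 0 < p := by linarith
  rw [← ENNReal.ofReal_le_ofReal_iff (add_nonneg (dirichletMpR_nonneg Λ A a p hR)
    (dirichletMpR_nonneg Λ B a p hR)), ENNReal.ofReal_add (dirichletMpR_nonneg Λ A a p hR)
    (dirichletMpR_nonneg Λ B a p hR), ofReal_dirichletMpR Λ _ a hp0 hR,
    ofReal_dirichletMpR Λ _ a hp0 hR, ofReal_dirichletMpR Λ _ a hp0 hR]
  have hsum : trigPoly (A ∪ B) a Λ = trigPoly A a Λ + trigPoly B a Λ :=
    funext fun t => sum_union hAB
  rw [hsum]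
  exact eLpNorm_add_le (continuous_trigPoly A a Λ).aestronglyMeasurable
    (continuous_trigPoly B a Λ).aestronglyMeasurable (by simpa using hp)

lemma dirichletMpR_mono {p q R : ℝ} (hp : 0 < p) (hpq : p ≤ q) (hR : 0 < R) :
    dirichletMpR Λ p A a R ≤ dirichletMpR Λ q A a R := by
  have : IsProbabilityMeasure (volume[|Set.Ioc (-R) R]) :=
    cond_isProbabilityMeasure_of_finite (by simpa using hR) (by simp)
  rw [← ENNReal.ofReal_le_ofReal_iff (dirichletMpR_nonneg Λ A a q hR),
    ofReal_dirichletMpR Λ A a hp hR, ofReal_dirichletMpR Λ A a (hp.trans_le hpq) hR]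
  exact eLpNorm_le_eLpNorm_of_exponent_le (ENNReal.ofReal_le_ofReal hpq)
    (continuous_trigPoly A a Λ).aestronglyMeasurable

lemma tendsto_dirichletMpR_two (hΛ : Function.Injective Λ) :
    Tendsto (dirichletMpR Λ 2 A a) atTop (𝓝 (√(∑ n ∈ A, ‖a n‖ ^ 2))) := by
  refine ((Real.continuous_sqrt.tendsto _).comp
    (tendsto_mean_sq_norm_trigPoly A a hΛ.injOn)).congr fun R => ?_
  simp [dirichletMpR, Real.sqrt_eq_rpow, trigPoly]

variable {Λ A a}

lemma dirichletHpNorm_nonneg {p : ℝ}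
    (h : Tendsto (dirichletMpR Λ p A a) atTop (𝓝 (dirichletHpNorm Λ p A a))) :
    0 ≤ dirichletHpNorm Λ p A a :=
  ge_of_tendsto h (eventually_gt_atTop 0 |>.mono fun _ hR => dirichletMpR_nonneg Λ A a p hR)

lemma dirichletHpNorm_union_le {p : ℝ} (hp : 1 ≤ p) {B : Finset ℕ} (hAB : Disjoint A B)
    (hA : Tendsto (dirichletMpR Λ p A a) atTop (𝓝 (dirichletHpNorm Λ p A a)))
    (hB : Tendsto (dirichletMpR Λ p B a) atTop (𝓝 (dirichletHpNorm Λ p B a)))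
    (hAB' : Tendsto (dirichletMpR Λ p (A ∪ B) a) atTop (𝓝 (dirichletHpNorm Λ p (A ∪ B) a))) :
    dirichletHpNorm Λ p (A ∪ B) a ≤ dirichletHpNorm Λ p A a + dirichletHpNorm Λ p B a :=
  le_of_tendsto_of_tendsto hAB' (hA.add hB)
    (eventually_gt_atTop 0 |>.mono fun _ hR => dirichletMpR_union_le Λ A a hp hR hAB)

lemma sqrt_sum_sq_le_dirichletHpNorm (hΛ : Function.Injective Λ) {p : ℝ} (hp : 2 ≤ p)
    (h : Tendsto (dirichletMpR Λ p A a) atTop (𝓝 (dirichletHpNorm Λ p A a))) :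
    √(∑ n ∈ A, ‖a n‖ ^ 2) ≤ dirichletHpNorm Λ p A a :=
  le_of_tendsto_of_tendsto (tendsto_dirichletMpR_two Λ A a hΛ) h
    (eventually_gt_atTop 0 |>.mono fun _ hR => dirichletMpR_mono Λ A a two_pos hp hR)


variable (Λ A a)

def freqSum (Λ : ℕ → ℝ) {k : ℕ} (u : Fin k → ℕ) : ℝ := ∑ j, Λ (u j)

noncomputable def freqSums (k : ℕ) : Finset ℝ :=
  (Fintype.piFinset fun _ : Fin k => A).image (freqSum Λ)

noncomputable def powCoeff (k : ℕ) (σ : ℝ) : ℂ :=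
  ∑ u ∈ Fintype.piFinset (fun _ : Fin k => A) with freqSum Λ u = σ, ∏ j, a (u j)

lemma trigPoly_pow (k : ℕ) (t : ℝ) :
    trigPoly A a Λ t ^ k = trigPoly (freqSums Λ A k) (powCoeff Λ A a k) id t := by
  classical
  have hexpand : trigPoly A a Λ t ^ k = ∑ u ∈ Fintype.piFinset (fun _ : Fin k => A),
      (∏ j, a (u j)) * Complex.exp (-(Complex.I * (freqSum Λ u * t))) := by
    rw [trigPoly, ← Fin.prod_const, prod_univ_sum]
    refine sum_congr rfl fun u _ => ?_
    rw [prod_mul_distrib, ← Complex.exp_sum, freqSum]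
    push_cast
    rw [sum_mul, mul_sum, sum_neg_distrib]
  rw [hexpand, trigPoly, ← sum_fiberwise_of_maps_to fun u hu => mem_image_of_mem (freqSum Λ) hu]
  refine sum_congr rfl fun σ _ => ?_
  rw [powCoeff, sum_mul]
  refine sum_congr rfl fun u hu => ?_
  rw [(mem_filter.1 hu).2, id]

lemma tendsto_dirichletMpR_pow {k : ℕ} (hk : 1 ≤ k) :
    Tendsto (fun R => dirichletMpR Λ (2 * k) A a R ^ (2 * k)) atTop
      (𝓝 (∑ σ ∈ freqSums Λ A k, ‖powCoeff Λ A a k σ‖ ^ 2)) := by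
  refine (tendsto_mean_sq_norm_trigPoly _ _ Function.injective_id.injOn).congr' ?_
  filter_upwards [eventually_gt_atTop 0] with R hR
  have h2k : (2 * (k : ℝ)) = ((2 * k : ℕ) : ℝ) := by push_cast; ring
  have hmean : 0 ≤ (1 / (2 * R)) * ∫ t in (-R)..R, ‖trigPoly A a Λ t‖ ^ ((2 * k : ℕ) : ℝ) :=
    mul_nonneg (by positivity)
      (intervalIntegral.integral_nonneg (by linarith) fun _ _ => by positivity)
  rw [dirichletMpR_eq_trigPoly, h2k, one_div ((2 * k : ℕ) : ℝ),
    Real.rpow_inv_natCast_pow hmean (by omega)]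
  simp_rw [Real.rpow_natCast, pow_mul', ← norm_pow, trigPoly_pow]

lemma dirichletHpNorm_pow_eq {k : ℕ} (hk : 1 ≤ k)
    (h : Tendsto (dirichletMpR Λ (2 * k) A a) atTop (𝓝 (dirichletHpNorm Λ (2 * k) A a))) :
    dirichletHpNorm Λ (2 * k) A a ^ (2 * k)
      = ∑ σ ∈ freqSums Λ A k, ‖powCoeff Λ A a k σ‖ ^ 2 :=
  tendsto_nhds_unique (h.pow _) (tendsto_dirichletMpR_pow Λ A a hk)

lemma powCoeff_one (k : ℕ) (σ : ℝ) :
    powCoeff Λ A (fun _ => 1) k σ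
      = #{u ∈ Fintype.piFinset (fun _ : Fin k => A) | freqSum Λ u = σ} := by
  simp [powCoeff]

variable {Λ A a}

lemma norm_powCoeff_le {c : ℝ} (hc : ∀ n ∈ A, ‖a n‖ ≤ c) (k : ℕ) (σ : ℝ) :
    ‖powCoeff Λ A a k σ‖ ≤ c ^ k * ‖powCoeff Λ A (fun _ => 1) k σ‖ := by
  rw [powCoeff_one, Complex.norm_natCast, mul_comm, ← nsmul_eq_mul, powCoeff]
  refine (norm_sum_le _ _).trans (sum_le_card_nsmul _ _ _ fun u hu => ?_)
  have hu := Fintype.mem_piFinset.1 (mem_filter.1 hu).1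
  rw [norm_prod]
  exact (prod_le_prod (fun _ _ => norm_nonneg _) fun j _ => hc _ (hu j)).trans_eq (by simp)

lemma dirichletHpNorm_le_mul_of_norm_le {k : ℕ} (hk : 1 ≤ k) {c : ℝ} (hc0 : 0 ≤ c)
    (hc : ∀ n ∈ A, ‖a n‖ ≤ c)
    (ha : Tendsto (dirichletMpR Λ (2 * k) A a) atTop (𝓝 (dirichletHpNorm Λ (2 * k) A a)))
    (h1 : Tendsto (dirichletMpR Λ (2 * k) A fun _ => 1) atTop
      (𝓝 (dirichletHpNorm Λ (2 * k) A fun _ => 1))) :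
    dirichletHpNorm Λ (2 * k) A a ≤ c * dirichletHpNorm Λ (2 * k) A fun _ => 1 := by
  refine (pow_le_pow_iff_left₀ (dirichletHpNorm_nonneg ha)
    (mul_nonneg hc0 (dirichletHpNorm_nonneg h1)) (by omega : 2 * k ≠ 0)).1 ?_
  rw [mul_pow, dirichletHpNorm_pow_eq Λ A a hk ha, dirichletHpNorm_pow_eq Λ A _ hk h1, mul_sum]
  refine sum_le_sum fun σ _ => ?_
  calc ‖powCoeff Λ A a k σ‖ ^ 2 ≤ (c ^ k * ‖powCoeff Λ A (fun _ => 1) k σ‖) ^ 2 :=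
        pow_le_pow_left₀ (norm_nonneg _) (norm_powCoeff_le hc k σ) 2
    _ = c ^ (2 * k) * ‖powCoeff Λ A (fun _ => 1) k σ‖ ^ 2 := by ring

end Dirichlet

/-- Every frequency exceeds `k` times the sum of the smaller ones, so that a sum of `k` frequencies
from `B` determines its summands up to order. -/
def IsLacunary (k : ℕ) (Λ : ℕ → ℝ) (B : Finset ℕ) : Prop :=
  ∀ b ∈ B, 0 < Λ b ∧ k * ∑ b' ∈ B with b' < b, Λ b' < Λ b

lemma isLacunary_insert_iff {k : ℕ} {Λ : ℕ → ℝ} {s : Finset ℕ} {a : ℕ} (hlt : ∀ b ∈ s, b < a) :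
    IsLacunary k Λ (insert a s) ↔ IsLacunary k Λ s ∧ 0 < Λ a ∧ k * ∑ b ∈ s, Λ b < Λ a := by
  have hfilter : ∀ b ∈ s, ({b' ∈ insert a s | b' < b} : Finset ℕ) = {b' ∈ s | b' < b} :=
    fun b hb => by rw [filter_insert, if_neg (hlt b hb).not_gt]
  have hfilter_a : ({b' ∈ insert a s | b' < a} : Finset ℕ) = s := by
    rw [filter_insert, if_neg (lt_irrefl a), filter_true_of_mem hlt]
  unfold IsLacunary
  rw [forall_mem_insert, hfilter_a, and_comm]
  exact and_congr_left' (forall₂_congr fun b hb => by rw [hfilter b hb])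

lemma exists_isLacunary {Λ : ℕ → ℝ} (hΛ : Tendsto Λ atTop atTop) (k m : ℕ) :
    ∃ B : Finset ℕ, #B = m ∧ IsLacunary k Λ B := by
  induction m with
  | zero => exact ⟨∅, rfl, by simp [IsLacunary]⟩
  | succ m ih =>
    obtain ⟨B, hcard, hB⟩ := ih
    obtain ⟨n, hnB, hn⟩ := ((eventually_gt_atTop (B.sup id)).and
      (hΛ.eventually (eventually_gt_atTop (max 0 (k * ∑ b ∈ B, Λ b))))).exists
    have hlt : ∀ b ∈ B, b < n := fun b hb => (le_sup (f := id) hb).trans_lt hnB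
    refine ⟨insert n B, by rw [card_insert_of_notMem fun h => (hlt n h).false, hcard], ?_⟩
    exact (isLacunary_insert_iff hlt).2
      ⟨hB, (le_max_left _ _).trans_lt hn, (le_max_right _ _).trans_lt hn⟩

lemma eq_of_mul_add_eq_mul_add {c d : ℕ} {w x y : ℝ} (hx : 0 ≤ x) (hxw : x < w) (hy : 0 ≤ y)
    (hyw : y < w) (h : c * w + x = d * w + y) : c = d := by
  by_contra hcd
  rcases Nat.lt_or_gt_of_ne hcd with hlt | hlt
  · have : (c : ℝ) + 1 ≤ d := by exact_mod_cast hlt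
    nlinarith
  · have : (d : ℝ) + 1 ≤ c := by exact_mod_cast hlt
    nlinarith

lemma IsLacunary.eq_of_sum_mul_eq {k : ℕ} {Λ : ℕ → ℝ} {B : Finset ℕ} (hB : IsLacunary k Λ B)
    {c d : ℕ → ℕ} (hc : ∀ b ∈ B, c b ≤ k) (hd : ∀ b ∈ B, d b ≤ k)
    (h : ∑ b ∈ B, (c b : ℝ) * Λ b = ∑ b ∈ B, (d b : ℝ) * Λ b) : ∀ b ∈ B, c b = d b := by
  induction B using Finset.induction_on_max with
  | empty => simp
  | insert a s hlt ih =>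
    obtain ⟨hs, hΛa, hgap⟩ := (isLacunary_insert_iff hlt).1 hB
    have hsmall : ∀ e : ℕ → ℕ, (∀ b ∈ s, e b ≤ k) →
        0 ≤ ∑ b ∈ s, (e b : ℝ) * Λ b ∧ ∑ b ∈ s, (e b : ℝ) * Λ b < Λ a := fun e he => by
      refine ⟨sum_nonneg fun b hb => mul_nonneg (Nat.cast_nonneg _) (hs b hb).1.le,
        lt_of_le_of_lt ?_ hgap⟩
      rw [mul_sum]
      exact sum_le_sum fun b hb => mul_le_mul_of_nonneg_right (by exact_mod_cast he b hb)
        (hs b hb).1.le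
    have hc' : ∀ b ∈ s, c b ≤ k := fun b hb => hc b (mem_insert_of_mem hb)
    have hd' : ∀ b ∈ s, d b ≤ k := fun b hb => hd b (mem_insert_of_mem hb)
    have ha : a ∉ s := fun h => (hlt a h).false
    rw [sum_insert ha, sum_insert ha] at h
    have hca : c a = d a := eq_of_mul_add_eq_mul_add (hsmall c hc').1 (hsmall c hc').2
      (hsmall d hd').1 (hsmall d hd').2 h
    rw [hca, add_right_inj] at h
    exact (forall_mem_insert _ _ _).2 ⟨hca, ih hs hc' hd' h⟩

lemma freqSum_eq_sum_card_mul (Λ : ℕ → ℝ) {k : ℕ} {B : Finset ℕ} {u : Fin k → ℕ}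
    (hu : ∀ j, u j ∈ B) : freqSum Λ u = ∑ b ∈ B, (#{j | u j = b} : ℝ) * Λ b := by
  rw [freqSum, ← sum_fiberwise_of_maps_to (fun j _ => hu j)]
  refine sum_congr rfl fun b _ => ?_
  rw [sum_congr rfl fun j hj => by rw [(mem_filter.1 hj).2], sum_const, nsmul_eq_mul]

lemma IsLacunary.exists_eq_of_freqSum_eq {k : ℕ} {Λ : ℕ → ℝ} {B : Finset ℕ}
    (hB : IsLacunary k Λ B) {u v : Fin k → ℕ} (hu : ∀ j, u j ∈ B) (hv : ∀ j, v j ∈ B)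
    (h : freqSum Λ u = freqSum Λ v) (j : Fin k) : ∃ j', u j' = v j := by
  have hcount : ∀ (w : Fin k → ℕ) (b : ℕ), #{j | w j = b} ≤ k := fun w b =>
    (card_filter_le _ _).trans (by simp)
  rw [freqSum_eq_sum_card_mul Λ hu, freqSum_eq_sum_card_mul Λ hv] at h
  have hvj := hB.eq_of_sum_mul_eq (fun b _ => hcount u b) (fun b _ => hcount v b) h (v j) (hv j)
  have hpos : 0 < #{j' | u j' = v j} := by
    rw [hvj]; exact card_pos.2 ⟨j, by simp⟩
  obtain ⟨j', hj'⟩ := card_pos.1 hpos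
  exact ⟨j', (mem_filter.1 hj').2⟩

lemma IsLacunary.card_fiber_le {k : ℕ} {Λ : ℕ → ℝ} {B : Finset ℕ} (hB : IsLacunary k Λ B)
    (σ : ℝ) : #{v ∈ Fintype.piFinset (fun _ : Fin k => B) | freqSum Λ v = σ} ≤ k ^ k := by
  rcases eq_empty_or_nonempty {v ∈ Fintype.piFinset (fun _ : Fin k => B) | freqSum Λ v = σ}
    with hempty | ⟨u, hu⟩
  · simp [hempty]
  rw [mem_filter, Fintype.mem_piFinset] at hu
  calc _ ≤ #((univ : Finset (Fin k → Fin k)).image fun π => u ∘ π) := by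
        refine card_le_card fun v hv => ?_
        rw [mem_filter, Fintype.mem_piFinset] at hv
        choose π hπ using hB.exists_eq_of_freqSum_eq hu.1 hv.1 (hu.2.trans hv.2.symm)
        exact mem_image.2 ⟨π, mem_univ _, funext hπ⟩
    _ ≤ k ^ k := card_image_le.trans (by simp)

lemma IsLacunary.dirichletHpNorm_one_le {k : ℕ} (hk : 1 ≤ k) {Λ : ℕ → ℝ} {B : Finset ℕ}
    (hB : IsLacunary k Λ B)
    (h : Tendsto (dirichletMpR Λ (2 * k) B fun _ => 1) atTop
      (𝓝 (dirichletHpNorm Λ (2 * k) B fun _ => 1))) :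
    dirichletHpNorm Λ (2 * k) B (fun _ => 1) ≤ √(k * #B) := by
  refine (pow_le_pow_iff_left₀ (dirichletHpNorm_nonneg h) (Real.sqrt_nonneg _)
    (by omega : 2 * k ≠ 0)).1 ?_
  rw [dirichletHpNorm_pow_eq Λ B _ hk h, pow_mul, Real.sq_sqrt (by positivity), mul_pow]
  set P := Fintype.piFinset fun _ : Fin k => B
  calc ∑ σ ∈ freqSums Λ B k, ‖powCoeff Λ B (fun _ => 1) k σ‖ ^ 2
      = ∑ σ ∈ freqSums Λ B k, (#{u ∈ P | freqSum Λ u = σ} : ℝ) ^ 2 := by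
        simp only [powCoeff_one, Complex.norm_natCast, P]
    _ ≤ ∑ σ ∈ freqSums Λ B k, (k ^ k : ℝ) * #{u ∈ P | freqSum Λ u = σ} := by
        refine sum_le_sum fun σ _ => ?_
        rw [sq]
        gcongr
        exact_mod_cast hB.card_fiber_le σ
    _ = k ^ k * #B ^ k := by
        rw [← mul_sum]
        norm_cast
        rw [freqSums, ← card_eq_sum_card_image, Fintype.card_piFinset, prod_const, card_univ,
          Fintype.card_fin]

lemma dirichletHpNorm_one_le_of_democratic {Λ : ℕ → ℝ} (hΛ : Tendsto Λ atTop atTop) {k : ℕ}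
    (hk : 1 ≤ k)
    (hlim : ∀ B : Finset ℕ, Tendsto (dirichletMpR Λ (2 * k) B fun _ => 1) atTop
      (𝓝 (dirichletHpNorm Λ (2 * k) B fun _ => 1)))
    {D : ℝ} (hD : 0 ≤ D)
    (hdem : ∀ A B : Finset ℕ, #A ≤ #B →
      dirichletHpNorm Λ (2 * k) A (fun _ => 1) ≤ D * dirichletHpNorm Λ (2 * k) B (fun _ => 1))
    (A : Finset ℕ) :
    dirichletHpNorm Λ (2 * k) A (fun _ => 1) ≤ D * √k * √(#A : ℝ) := by
  obtain ⟨B, hcard, hB⟩ := exists_isLacunary hΛ k #A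
  calc dirichletHpNorm Λ (2 * k) A (fun _ => 1)
      ≤ D * dirichletHpNorm Λ (2 * k) B (fun _ => 1) := hdem A B hcard.ge
    _ ≤ D * √(k * #B) := by gcongr; exact hB.dirichletHpNorm_one_le hk (hlim B)
    _ = D * √k * √(#A : ℝ) := by rw [hcard, Real.sqrt_mul (Nat.cast_nonneg _), mul_assoc]

lemma mul_sqrt_card_le_sqrt_sum_sq {α : Type*} {s : Finset α} {f : α → ℝ} {r : ℝ} (hr : 0 ≤ r)
    (hf : ∀ x ∈ s, r ≤ f x) : r * √(#s : ℝ) ≤ √(∑ x ∈ s, f x ^ 2) := by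
  rw [← Real.sqrt_sq hr, ← Real.sqrt_mul' _ (Nat.cast_nonneg _), mul_comm, ← nsmul_eq_mul]
  exact Real.sqrt_le_sqrt (card_nsmul_le_sum _ _ _ fun x hx => pow_le_pow_left₀ hr (hf x hx) 2)

lemma le_log_card_mul_sqrt_sum_sq {α E : Type*} [DecidableEq α] [SeminormedAddGroup E]
    {N : Finset α → ℝ} {K : ℝ} (hK : 0 ≤ K) {a : α → E}
    (hunion : ∀ s t, Disjoint s t → N (s ∪ t) ≤ N s + N t)
    (hflat : ∀ s c, 0 ≤ c → (∀ x ∈ s, ‖a x‖ ≤ c) → N s ≤ c * K * √(#s : ℝ)) (A : Finset α) :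
    N A ≤ (2 * Nat.log 2 #A + 3) * K * √(∑ x ∈ A, ‖a x‖ ^ 2) := by
  set S := √(∑ x ∈ A, ‖a x‖ ^ 2)
  have hS : 0 ≤ S := Real.sqrt_nonneg _
  set T : ℕ → Finset α := fun j => {x ∈ A | ‖a x‖ ≤ S / 2 ^ j}
  have hT0 : T 0 = A := filter_true_of_mem fun x hx => by
    simpa using Real.le_sqrt_of_sq_le (single_le_sum (f := fun x => ‖a x‖ ^ 2)
      (fun _ _ => sq_nonneg _) hx)
  have hTsucc : ∀ j, T (j + 1) ⊆ T j := fun j x hx => by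
    rw [mem_filter] at hx ⊢
    exact ⟨hx.1, hx.2.trans (div_le_div_of_nonneg_left hS (by positivity)
      (pow_le_pow_right₀ one_le_two j.le_succ))⟩
  have hsplit : ∀ J, N A ≤ ∑ j ∈ range J, N (T j \ T (j + 1)) + N (T J) := by
    intro J
    induction J with
    | zero => simp [hT0]
    | succ J ih =>
      have := hunion _ _ (sdiff_disjoint : Disjoint (T J \ T (J + 1)) (T (J + 1)))
      rw [sdiff_union_of_subset (hTsucc J)] at this
      rw [sum_range_succ]
      linarith
  have hlayer : ∀ j, N (T j \ T (j + 1)) ≤ 2 * K * S := by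
    intro j
    set L := T j \ T (j + 1)
    calc N L ≤ S / 2 ^ j * K * √(#L : ℝ) :=
          hflat L _ (by positivity) fun x hx => (mem_filter (s := A).1 (mem_sdiff.1 hx).1).2
      _ = 2 * K * (S / 2 ^ (j + 1) * √(#L : ℝ)) := by ring
      _ ≤ 2 * K * √(∑ x ∈ L, ‖a x‖ ^ 2) := by
          gcongr
          refine mul_sqrt_card_le_sqrt_sum_sq (by positivity) fun x hx => ?_
          obtain ⟨hxj, hxj1⟩ := mem_sdiff.1 hx
          exact (not_le.1 fun h => hxj1 (mem_filter.2 ⟨(mem_filter.1 hxj).1, h⟩)).le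
      _ ≤ 2 * K * S := by
          gcongr
          exact Real.sqrt_le_sqrt <| sum_le_sum_of_subset_of_nonneg
            (sdiff_subset.trans (filter_subset _ _)) fun _ _ _ => sq_nonneg _
  set J := Nat.log 2 #A + 1
  have htail : N (T J) ≤ K * S := by
    have hcard : √(#(T J) : ℝ) ≤ 2 ^ J := by
      have : (#(T J) : ℝ) < 2 ^ J := by
        exact_mod_cast (card_le_card (filter_subset _ A)).trans_lt
          (Nat.lt_pow_succ_log_self one_lt_two _)
      refine Real.sqrt_le_iff.2 ⟨by positivity, this.le.trans ?_⟩
      exact le_self_pow₀ (one_le_pow₀ one_le_two) two_ne_zero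
    calc N (T J) ≤ S / 2 ^ J * K * √(#(T J) : ℝ) :=
          hflat _ _ (by positivity) fun x hx => (mem_filter.1 hx).2
      _ ≤ S / 2 ^ J * K * 2 ^ J := by gcongr
      _ = K * S := by field_simp
  calc N A ≤ ∑ j ∈ range J, N (T j \ T (j + 1)) + N (T J) := hsplit J
    _ ≤ ∑ j ∈ range J, 2 * K * S + K * S := add_le_add (sum_le_sum fun j _ => hlayer j) htail
    _ = (2 * Nat.log 2 #A + 3) * K * S := by
        simp only [sum_const, card_range, nsmul_eq_mul, J]
        push_cast
        ring

lemma two_mul_natLog_add_three_le {n : ℕ} (hn : 1 ≤ n) :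
    (2 * Nat.log 2 n + 3 : ℝ) ≤ 5 / Real.log 2 * Real.log (n + 1) := by
  have hlog2 : 0 < Real.log 2 := Real.log_pos one_lt_two
  have hn' : (1 : ℝ) ≤ n := by exact_mod_cast hn
  have hlog : Nat.log 2 n * Real.log 2 ≤ Real.log (n + 1) := by
    rw [← Real.log_pow]
    refine Real.log_le_log (by positivity) ?_
    have : ((2 ^ Nat.log 2 n : ℕ) : ℝ) ≤ n := by exact_mod_cast Nat.pow_log_le_self 2 (by omega)
    push_cast at this
    linarith
  have hlog' : Real.log 2 ≤ Real.log (n + 1) := Real.log_le_log two_pos (by linarith)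
  rw [div_mul_eq_mul_div, le_div_iff₀ hlog2]
  linarith

theorem democratic_implies_almost_H2_general (Λ : ℕ → ℝ) (hmono : StrictMono Λ)
    (hunb : Tendsto Λ atTop atTop)
    (k : ℕ) (hk : 1 ≤ k)
    (hlim : ∀ (A : Finset ℕ) (a : ℕ → ℂ),
      Tendsto (dirichletMpR Λ (2 * k) A a) atTop (nhds (dirichletHpNorm Λ (2 * k) A a)))
    (D : ℝ) (hD : 0 < D)
    (hdem : ∀ A B : Finset ℕ, A.card ≤ B.card →
      dirichletHpNorm Λ (2 * k) A (fun _ => 1) ≤ D * dirichletHpNorm Λ (2 * k) B (fun _ => 1)) :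
    ∃ C : ℝ, 0 < C ∧ ∀ (A : Finset ℕ) (a : ℕ → ℂ),
      Real.sqrt (∑ n ∈ A, ‖a n‖ ^ 2) ≤ dirichletHpNorm Λ (2 * k) A a ∧
        dirichletHpNorm Λ (2 * k) A a ≤
          C * Real.log (A.card + 1) * Real.sqrt (∑ n ∈ A, ‖a n‖ ^ 2) := by
  have hk' : (1 : ℝ) ≤ k := by exact_mod_cast hk
  have hK : 0 < D * √k := mul_pos hD (Real.sqrt_pos.2 (by linarith))
  have hflat := dirichletHpNorm_one_le_of_democratic hunb hk (hlim · _) hD.le hdem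
  refine ⟨5 / Real.log 2 * (D * √k), mul_pos (div_pos (by norm_num) (Real.log_pos one_lt_two)) hK,
    fun A a => ⟨sqrt_sum_sq_le_dirichletHpNorm hmono.injective (by linarith) (hlim A a), ?_⟩⟩
  have hdyadic := le_log_card_mul_sqrt_sum_sq (N := fun E => dirichletHpNorm Λ (2 * k) E a) hK.le
    (fun E F hEF => dirichletHpNorm_union_le (by linarith) hEF (hlim E a) (hlim F a) (hlim _ a))
    (fun E c hc0 hc => (dirichletHpNorm_le_mul_of_norm_le hk hc0 hc (hlim E a) (hlim E _)).trans
      (by rw [mul_assoc]; gcongr; exact hflat E)) A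
  rcases A.eq_empty_or_nonempty with rfl | hA
  · simpa using hdyadic
  calc dirichletHpNorm Λ (2 * k) A a
      ≤ (2 * Nat.log 2 #A + 3) * (D * √k) * √(∑ n ∈ A, ‖a n‖ ^ 2) := hdyadic
    _ ≤ 5 / Real.log 2 * Real.log (#A + 1) * (D * √k) * √(∑ n ∈ A, ‖a n‖ ^ 2) := by
        gcongr
        exact two_mul_natLog_add_three_le hA.card_pos
    _ = _ := by ring

/-- If the canonical basis `{e^{-λ_n s}}` is democratic in `H_{2k}^λ`, then the `H_{2k}^λ`
norm of any Dirichlet polynomial lies between the `H_2^λ` norm and a `log(|A|+1)` multiple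
of it. -/
theorem democratic_implies_almost_H2 (Λ : ℕ → ℝ) (hmono : StrictMono Λ)
    (hpos : ∀ n, 0 ≤ Λ n) (hunb : Tendsto Λ atTop atTop)
    (k : ℕ) (hk : 1 ≤ k)
    (hlim : ∀ (A : Finset ℕ) (a : ℕ → ℂ),
      Tendsto (dirichletMpR Λ (2 * k) A a) atTop (nhds (dirichletHpNorm Λ (2 * k) A a)))
    (D : ℝ) (hD : 0 < D)
    (hdem : ∀ A B : Finset ℕ, A.card ≤ B.card →
      dirichletHpNorm Λ (2 * k) A (fun _ => 1) ≤ D * dirichletHpNorm Λ (2 * k) B (fun _ => 1)) :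
    ∃ C : ℝ, 0 < C ∧ ∀ (A : Finset ℕ) (a : ℕ → ℂ),
      Real.sqrt (∑ n ∈ A, ‖a n‖ ^ 2) ≤ dirichletHpNorm Λ (2 * k) A a ∧
        dirichletHpNorm Λ (2 * k) A a ≤
          C * Real.log (A.card + 1) * Real.sqrt (∑ n ∈ A, ‖a n‖ ^ 2) :=
  democratic_implies_almost_H2_general Λ hmono hunb k hk hlim D hD hdem
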